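/- arXiv:2503.23578 — 2 statements merged into one kernel-verified Lean document; each statement's English description precedes it below -/
import Mathlib

section
/- For all positive integers k and n, k·M_n ⊆ (kQ_n) ∩ ℤ^{π(n)} ⊆ (k+π(n))·M_n, where Q_n is the convex hull of M_n in ℝ^{π(n)}. -/
open Pointwise MeasureTheory

/-- `Mn n` is the set of exponent vectors `α ∈ ℕ^{π(n)}` (indexed by the primes
`p_1 < ... < p_{π(n)}` at most `n`, where `p_j = Nat.nth Nat.Prime (j-1)`)
with `∏ j, p_j ^ α_j ≤ n`. -/
def Mn (n : ℕ) : Set (Fin (Nat.primeCounting n) → ℕ) :=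
  {α | ∏ j : Fin (Nat.primeCounting n), (Nat.nth Nat.Prime (j : ℕ)) ^ (α j) ≤ n}

/-- `ksum k A` is the `k`-fold sumset `{a_1 + ... + a_k : a_i ∈ A}`. -/
def ksum {V : Type*} [AddCommMonoid V] (k : ℕ) (A : Set V) : Set V :=
  {x | ∃ f : Fin k → V, (∀ i, f i ∈ A) ∧ ∑ i, f i = x}

/-- `Pset k n` is the set of products of `k` factors from `{1, ..., n}`. -/
def Pset (k n : ℕ) : Set ℕ :=
  {m | ∃ l : Fin n → ℕ, (∑ j, l j) = k ∧ ∏ j : Fin n, ((j : ℕ) + 1) ^ (l j) = m}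

/-- `Qn n` is the convex hull of `Mn n` in `ℝ^{π(n)}`. -/
def Qn (n : ℕ) : Set (Fin (Nat.primeCounting n) → ℝ) :=
  convexHull ℝ
    ((fun (α : Fin (Nat.primeCounting n) → ℕ) (j : Fin (Nat.primeCounting n)) => (α j : ℝ)) ''
      Mn n)

/-- The simplex `{(x,y,z) ∈ ℝ³ : x,y,z ≥ 0, 6x + 10y + 15z ≤ 30}`. -/
def Q3 : Set (Fin 3 → ℝ) :=
  {x | 0 ≤ x 0 ∧ 0 ≤ x 1 ∧ 0 ≤ x 2 ∧ 6 * x 0 + 10 * x 1 + 15 * x 2 ≤ 30}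

lemma list_mem_ksum {V : Type*} [AddCommMonoid V] {A : Set V} {l : List V} {k : ℕ}
    (hlen : l.length = k) (h : ∀ v ∈ l, v ∈ A) : l.sum ∈ ksum k A := by
  subst hlen
  refine ⟨l.get, fun i => h _ (l.get_mem ..), ?_⟩
  conv_rhs => rw [← List.ofFn_get l]
  rw [List.sum_ofFn]

lemma mn_zero {n : ℕ} (hn : 0 < n) : (0 : Fin (Nat.primeCounting n) → ℕ) ∈ Mn n := by
  simp only [Mn, Set.mem_setOf_eq, Pi.zero_apply, pow_zero, Finset.prod_const_one]
  exact hn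

lemma mn_mono {n : ℕ} {α β : Fin (Nat.primeCounting n) → ℕ} (h : ∀ j, α j ≤ β j)
    (hβ : β ∈ Mn n) : α ∈ Mn n := by
  have hle : (∏ j : Fin (Nat.primeCounting n), (Nat.nth Nat.Prime (j : ℕ)) ^ (α j)) ≤
      ∏ j : Fin (Nat.primeCounting n), (Nat.nth Nat.Prime (j : ℕ)) ^ (β j) :=
    Finset.prod_le_prod' fun j _ => Nat.pow_le_pow_right (Nat.prime_nth_prime j).one_lt.le (h j)
  exact hle.trans hβ

lemma assemble {n : ℕ} (hn : 0 < n) {K : ℕ} (L : List (Fin (Nat.primeCounting n) → ℕ))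
    (hL : ∀ v ∈ L, v ∈ Mn n) (hlen : L.length ≤ K) : L.sum ∈ ksum K (Mn n) := by
  have h : (L ++ List.replicate (K - L.length) 0).sum = L.sum := by
    simp
  rw [← h]
  refine list_mem_ksum ?_ ?_
  · simp; omega
  · intro v hv
    rcases List.mem_append.1 hv with hv | hv
    · exact hL v hv
    · rw [List.eq_of_mem_replicate hv]; exact mn_zero hn

lemma exists_list_smul {V : Type*} [AddCommMonoid V] {ι : Type*} (li : List ι)
    (a : ι → ℕ) (m : ι → V) :
    ∃ l : List V, l.length = (li.map a).sum ∧ (∀ v ∈ l, ∃ i, v = m i) ∧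
      l.sum = (li.map (fun i => a i • m i)).sum := by
  induction li with
  | nil => exact ⟨[], by simp, by simp, by simp⟩
  | cons i li ih =>
    obtain ⟨l, h1, h2, h3⟩ := ih
    refine ⟨List.replicate (a i) (m i) ++ l, by simp [h1], ?_, by simp [h3]⟩
    intro v hv
    rcases List.mem_append.1 hv with hv | hv
    · exact ⟨i, List.eq_of_mem_replicate hv⟩
    · exact h2 v hv

lemma split_le_sum {n : ℕ} :
    ∀ (l : List (Fin (Nat.primeCounting n) → ℕ)) (r : Fin (Nat.primeCounting n) → ℕ),
    (∀ v ∈ l, v ∈ Mn n) → (∀ j, r j ≤ l.sum j) →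
    ∃ l' : List (Fin (Nat.primeCounting n) → ℕ),
      l'.length = l.length ∧ (∀ v ∈ l', v ∈ Mn n) ∧ l'.sum = r := by
  intro l
  induction l with
  | nil =>
    intro r _ hr
    refine ⟨[], rfl, by simp, ?_⟩
    funext j
    exact (Nat.le_zero.1 (by simpa using hr j)).symm
  | cons v l ih =>
    intro r hmem hr
    obtain ⟨l', h1, h2, h3⟩ := ih (fun j => r j - v j) (fun w hw => hmem w (by simp [hw]))
      (fun j => by have := hr j; simp [List.sum_cons] at this ⊢; omega)
    refine ⟨(fun j => min (r j) (v j)) :: l', by simp [h1], ?_, ?_⟩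
    · intro w hw
      rcases List.mem_cons.1 hw with hw | hw
      · subst hw
        exact mn_mono (fun j => min_le_right _ _) (hmem v (by simp))
      · exact h2 w hw
    · funext j
      have := hr j
      simp [List.sum_cons, h3] at this ⊢
      omega

theorem stmt4 (k n : ℕ) (hk : 0 < k) (hn : 0 < n) :
    ((fun (α : Fin (Nat.primeCounting n) → ℕ) (j : Fin (Nat.primeCounting n)) => (α j : ℝ)) ''
        ksum k (Mn n) ⊆ (k : ℝ) • Qn n) ∧
    ∀ x : Fin (Nat.primeCounting n) → ℤ,
      (fun j => (x j : ℝ)) ∈ (k : ℝ) • Qn n →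
      ∃ α ∈ ksum (k + Nat.primeCounting n) (Mn n), ∀ j, (α j : ℤ) = x j := by
  have hk0 : (k : ℝ) ≠ 0 := Nat.cast_ne_zero.2 hk.ne'
  constructor
  · rintro _ ⟨α, ⟨f, hf, rfl⟩, rfl⟩
    refine Set.mem_smul_set.2
      ⟨∑ i : Fin k, ((k:ℝ)⁻¹) • (fun j => (f i j : ℝ)), ?_, ?_⟩
    · refine (convex_convexHull ℝ _).sum_mem (fun i _ => by positivity) ?_
        (fun i _ => subset_convexHull ℝ _ ⟨f i, hf i, rfl⟩)
      rw [Finset.sum_const, Finset.card_univ, Fintype.card_fin, nsmul_eq_mul,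
        mul_inv_cancel₀ hk0]
    · funext j
      simp only [Pi.smul_apply, Finset.sum_apply, smul_eq_mul]
      push_cast
      rw [Finset.mul_sum]
      exact Finset.sum_congr rfl fun i _ => by
        rw [← mul_assoc, mul_inv_cancel₀ hk0, one_mul]
  · intro x hx
    obtain ⟨y, hyQ, hky⟩ := Set.mem_smul_set.1 hx
    rw [Qn] at hyQ
    obtain ⟨ι, hfin, z, w, hzr, hAI, hw, hw1, hzy⟩ :=
      eq_pos_convex_span_of_mem_convexHull hyQ
    have hcard : Fintype.card ι ≤ Nat.primeCounting n + 1 := by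
      have h1 := hAI.card_le_finrank_succ
      have h2 : Module.finrank ℝ (vectorSpan ℝ (Set.range z)) ≤ Nat.primeCounting n :=
        le_trans (Submodule.finrank_le _) (by simp [Module.finrank_fin_fun])
      omega
    have hm : ∀ i : ι, ∃ mv ∈ Mn n, (fun j => ((mv j : ℕ) : ℝ)) = z i := by
      intro i
      obtain ⟨mv, hmv, heq⟩ := hzr ⟨i, rfl⟩
      exact ⟨mv, hmv, heq⟩
    choose m hmM hmz using hm
    have hzij : ∀ i j, z i j = (m i j : ℝ) := fun i j => by rw [← hmz i]
    set c : ι → ℝ := fun i => (k:ℝ) * w i with hc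
    have hc0 : ∀ i, 0 ≤ c i := fun i => mul_nonneg (Nat.cast_nonneg k) (hw i).le
    have hkey : ∀ j, (x j : ℝ) = ∑ i, c i * (m i j : ℝ) := by
      intro j
      have h1 := congrFun hky j
      simp only [Pi.smul_apply, smul_eq_mul] at h1
      rw [← h1, ← hzy]
      simp only [Finset.sum_apply, Pi.smul_apply, smul_eq_mul, Finset.mul_sum]
      exact Finset.sum_congr rfl fun i _ => by rw [hzij, mul_assoc]
    set a : ι → ℕ := fun i => ⌊c i⌋₊ with ha
    have haR : ∀ i, (a i : ℝ) ≤ c i := fun i => Nat.floor_le (hc0 i)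
    have haR1 : ∀ i, c i - a i ≤ 1 := fun i => by
      have := Nat.lt_floor_add_one (c i); simp only [ha]; linarith
    have hcsum : ∑ i, c i = k := by
      simp only [hc, ← Finset.mul_sum, hw1, mul_one]
    set A : ℕ := ∑ i, a i with hA
    have hAk : (A : ℝ) ≤ k := by
      rw [hA]
      push_cast
      calc ∑ i, (a i : ℝ) ≤ ∑ i, c i := Finset.sum_le_sum fun i _ => haR i
        _ = k := hcsum
    have hAkN : A ≤ k := by exact_mod_cast hAk
    set rZ : Fin (Nat.primeCounting n) → ℤ :=
      fun j => x j - ∑ i, (a i : ℤ) * (m i j : ℤ) with hrZ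
    have hrZR : ∀ j, ((rZ j : ℤ) : ℝ) = ∑ i, (c i - a i) * (m i j : ℝ) := by
      intro j
      simp only [hrZ]
      push_cast
      rw [hkey j, ← Finset.sum_sub_distrib]
      exact Finset.sum_congr rfl fun i _ => (sub_mul _ _ _).symm
    have hrZ0 : ∀ j, 0 ≤ rZ j := by
      intro j
      have hR : (0:ℝ) ≤ (rZ j : ℝ) := by
        rw [hrZR j]
        exact Finset.sum_nonneg fun i _ =>
          mul_nonneg (by linarith [haR i]) (Nat.cast_nonneg _)
      exact_mod_cast hR
    set r : Fin (Nat.primeCounting n) → ℕ := fun j => (rZ j).toNat with hr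
    have hrcast : ∀ j, (r j : ℤ) = rZ j := fun j => Int.toNat_of_nonneg (hrZ0 j)
    have hxdec : ∀ j, x j = (∑ i, (a i : ℤ) * (m i j : ℤ)) + r j := by
      intro j
      rw [hrcast j]
      simp only [hrZ]
      ring
    have hrle : ∀ j, r j ≤ ∑ i, m i j := by
      intro j
      have hR : ((r j : ℤ) : ℝ) ≤ ((∑ i, m i j : ℕ) : ℝ) := by
        rw [hrcast j, hrZR j]
        push_cast
        refine Finset.sum_le_sum fun i _ => ?_
        calc (c i - a i) * (m i j : ℝ) ≤ 1 * (m i j : ℝ) :=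
              mul_le_mul_of_nonneg_right (haR1 i) (Nat.cast_nonneg _)
          _ = (m i j : ℝ) := one_mul _
      exact_mod_cast hR
    obtain ⟨L0, hL0len, hL0mem, hL0sum⟩ := exists_list_smul Finset.univ.toList a m
    have hL0len' : L0.length = A := by rw [hL0len, Finset.sum_map_toList]
    have hL0sum' : L0.sum = ∑ i, a i • m i := by rw [hL0sum, Finset.sum_map_toList]
    have hL0Mn : ∀ v ∈ L0, v ∈ Mn n := by
      intro v hv
      obtain ⟨i, rfl⟩ := hL0mem v hv
      exact hmM i
    have hsumj : ∀ j, (∑ i, a i • m i) j = ∑ i, a i * m i j := by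
      intro j
      simp [Finset.sum_apply, Pi.smul_apply, smul_eq_mul]
    by_cases hAeq : A = k
    · -- r = 0 in this case
      have hsum0 : ∑ i, (c i - a i) = 0 := by
        rw [Finset.sum_sub_distrib, hcsum]
        rw [hA] at hAeq
        rw [← hAeq]
        push_cast
        ring
      have hca : ∀ i, c i - a i = 0 := by
        intro i
        exact (Finset.sum_eq_zero_iff_of_nonneg
          (fun i _ => by linarith [haR i])).1 hsum0 i (Finset.mem_univ i)
      have hr0 : ∀ j, r j = 0 := by
        intro j
        have h1 : ((rZ j : ℤ) : ℝ) = 0 := by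
          rw [hrZR j]
          exact Finset.sum_eq_zero fun i _ => by rw [hca i, zero_mul]
        have h2 : rZ j = 0 := by exact_mod_cast h1
        simp [hr, h2]
      refine ⟨L0.sum, assemble hn L0 hL0Mn (by rw [hL0len']; omega), ?_⟩
      intro j
      rw [hxdec j, hr0 j, hL0sum']
      push_cast [hsumj j]
      ring
    · have hAlt : A + 1 ≤ k := Nat.lt_of_le_of_ne hAkN hAeq
      have hmapsum : (Finset.univ.toList.map m).sum = ∑ i, m i := Finset.sum_map_toList _ _
      obtain ⟨L1, hL1len, hL1mem, hL1sum⟩ := split_le_sum (Finset.univ.toList.map m) r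
        (fun v hv => by obtain ⟨i, _, rfl⟩ := List.mem_map.1 hv; exact hmM i)
        (fun j => by rw [hmapsum, Finset.sum_apply]; exact hrle j)
      have hL1len' : L1.length = Fintype.card ι := by
        rw [hL1len, List.length_map, Finset.length_toList, Finset.card_univ]
      refine ⟨(L0 ++ L1).sum, assemble hn _ (fun v hv => ?_) ?_, ?_⟩
      · rcases List.mem_append.1 hv with hv | hv
        · exact hL0Mn v hv
        · exact hL1mem v hv
      · rw [List.length_append, hL0len', hL1len']; omega
      · intro j
        rw [hxdec j]
        have hval : (L0 ++ L1).sum j = (∑ i, a i * m i j) + r j := by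
          rw [List.sum_append, hL0sum', hL1sum, Pi.add_apply, hsumj j]
        rw [hval]
        push_cast
        ring
end

section
/- Let Q = {(x,y,z) ∈ ℝ^3 : x ≥ 0, y ≥ 0, z ≥ 0, 6x + 10y + 15z ≤ 30}. Then the point (4,2,1) lies in the dilate 2Q but is not a sum of two integral points of Q; i.e., (4,2,1) ∈ 2Q ∩ ℤ^3 but (4,2,1) ∉ (Q ∩ ℤ^3) + (Q ∩ ℤ^3). Hence Q is not integrally closed. -/
/-! The linear form `ℓ = 6x + 10y + 15z` equals `59` at `(4, 2, 1)` and is at most `30` on `Q`, so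
writing `(4, 2, 1)` as a sum of two lattice points of `Q` forces one of them to have `ℓ = 29`.
But `29` is the Frobenius number of `6, 10, 15`: it is not a nonnegative integer combination of
them. -/

open Pointwise MeasureTheory

theorem six_mul_add_ten_mul_add_fifteen_mul_ne_29 {x y z : ℤ} (hx : 0 ≤ x) (hy : 0 ≤ y)
    (hz : 0 ≤ z) : 6 * x + 10 * y + 15 * z ≠ 29 := by
  omega

theorem intCast_mem_Q3_iff (a : Fin 3 → ℤ) :
    (fun j => (a j : ℝ)) ∈ Q3 ↔
      0 ≤ a 0 ∧ 0 ≤ a 1 ∧ 0 ≤ a 2 ∧ 6 * a 0 + 10 * a 1 + 15 * a 2 ≤ 30 := by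
  simp only [Q3, Set.mem_ofPred_eq]
  norm_cast

theorem stmt6 :
    (![4, 2, 1] : Fin 3 → ℝ) ∈ (2 : ℝ) • Q3 ∧
    ¬ ∃ a b : Fin 3 → ℤ, (fun j => (a j : ℝ)) ∈ Q3 ∧ (fun j => (b j : ℝ)) ∈ Q3 ∧
        a + b = ![4, 2, 1] := by
  constructor
  · rw [Set.mem_smul_set_iff_inv_smul_mem₀ two_ne_zero]
    norm_num [Q3, Matrix.cons_val_two, Matrix.vecHead, Matrix.vecTail]
  · rintro ⟨a, b, ha, hb, hab⟩
    rw [intCast_mem_Q3_iff] at ha hb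
    obtain ⟨ha0, ha1, ha2, ha⟩ := ha
    obtain ⟨hb0, hb1, hb2, hb⟩ := hb
    have h0 : a 0 + b 0 = 4 := by simpa using congrFun hab 0
    have h1 : a 1 + b 1 = 2 := by simpa using congrFun hab 1
    have h2 : a 2 + b 2 = 1 := by simpa using congrFun hab 2
    rcases (by omega : 6 * a 0 + 10 * a 1 + 15 * a 2 = 29 ∨ 6 * b 0 + 10 * b 1 + 15 * b 2 = 29)
      with h | h
    · exact six_mul_add_ten_mul_add_fifteen_mul_ne_29 ha0 ha1 ha2 h
    · exact six_mul_add_ten_mul_add_fifteen_mul_ne_29 hb0 hb1 hb2 h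
end
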